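/- arXiv:2601.16588 — 4 statements merged into one kernel-verified Lean document; each statement's English description precedes it below -/
import Mathlib

section
/- Let n be a positive integer and let M be a symmetric n×n integer matrix all of whose diagonal entries are even and whose determinant is odd. Then n is even, and det(M) ≡ (−1)^{n/2} (mod 4). -/
/-!
Work modulo 4. An odd determinant forces an odd entry `b = M 0 j` in the first row, and `j ≠ 0`
because the diagonal is even. The block `A = [[a, b], [b, d]]` on the indices `0, j` has
`det A = ad - b² ≡ -1`, so `A⁻¹ = -adj A`, and the Schur complement `S = D + Bᵀ (adj A) B` is again
symmetric with even diagonal, since `adj A = [[d, -b], [-b, a]]` is. Hence `det M ≡ -det S` with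
`S` of size `n - 2` and odd determinant, and induction ends at size `0`, as a `1 × 1` matrix with
even diagonal has even determinant.
-/

open Matrix

namespace Matrix

variable {ι κ R : Type*} [CommRing R]

theorem dvd_det_of_forall_dvd_row [Fintype ι] [DecidableEq ι] (M : Matrix ι ι R) (i : ι) (c : R)
    (h : ∀ j, c ∣ M i j) : c ∣ M.det := by
  choose v hv using h
  have hrow : M i = c • v := funext hv
  rw [← updateRow_eq_self M i, hrow, det_updateRow_smul]
  exact dvd_mul_right _ _

theorem det_fromBlocks_of_mul_eq_one [Fintype ι] [DecidableEq ι] [Fintype κ] [DecidableEq κ]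
    {A A' : Matrix ι ι R} (hA : A * A' = 1)
    (B : Matrix ι κ R) (C : Matrix κ ι R) (D : Matrix κ κ R) :
    (fromBlocks A B C D).det = A.det * (D - C * A' * B).det := by
  let := invertibleOfRightInverse A A' hA
  rw [det_fromBlocks₁₁, invOf_eq_nonsing_inv, inv_eq_right_inv hA]

theorem two_dvd_transpose_mul_mul_diag {X : Matrix (Fin 2) (Fin 2) R} (hX : X.IsSymm)
    (h₀ : 2 ∣ X 0 0) (h₁ : 2 ∣ X 1 1) (B : Matrix (Fin 2) κ R) (i : κ) :
    2 ∣ (Bᵀ * X * B) i i := by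
  obtain ⟨x, hx⟩ := h₀
  obtain ⟨z, hz⟩ := h₁
  have hexp : (Bᵀ * X * B) i i =
      B 0 i * X 0 0 * B 0 i + 2 * (B 0 i * X 0 1 * B 1 i) + B 1 i * X 1 1 * B 1 i := by
    simp only [mul_apply, Fin.sum_univ_two, transpose_apply, hX.apply 0 1]
    ring
  rw [hexp, hx, hz]
  exact ⟨B 0 i * x * B 0 i + B 0 i * X 0 1 * B 1 i + B 1 i * z * B 1 i, by ring⟩

end Matrix

theorem Fin.exists_sum_fin_two_equiv {m : ℕ} {j : Fin (m + 2)} (hj : j ≠ 0) :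
    ∃ e : Fin 2 ⊕ Fin m ≃ Fin (m + 2), e (.inl 0) = 0 ∧ e (.inl 1) = j := by
  refine ⟨(finSumFinEquiv.trans (finCongr (add_comm 2 m))).trans (Equiv.swap 1 j), ?_, ?_⟩
  · have h0 : finCongr (add_comm 2 m) (Fin.castAdd m 0) = 0 := rfl
    simp [h0, Equiv.swap_apply_of_ne_of_ne, hj.symm]
  · have h1 : finCongr (add_comm 2 m) (Fin.castAdd m 1) = 1 := rfl
    simp [h1]

namespace ZMod4

theorem mul_self_eq_one {x : ZMod 4} (hx : ¬ 2 ∣ x) : x * x = 1 := by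
  revert x; decide

theorem mul_eq_zero_of_two_dvd {x y : ZMod 4} (hx : 2 ∣ x) (hy : 2 ∣ y) : x * y = 0 := by
  obtain ⟨x, rfl⟩ := hx
  obtain ⟨y, rfl⟩ := hy
  have h4 : (4 : ZMod 4) = 0 := rfl
  linear_combination (x * y) * h4

theorem two_dvd_intCast_iff (k : ℤ) : 2 ∣ (k : ZMod 4) ↔ 2 ∣ k := by
  refine ⟨fun h => ?_, fun h => by exact_mod_cast map_dvd (Int.castRingHom (ZMod 4)) h⟩
  have h2 := map_dvd (ZMod.castHom (show 2 ∣ 4 by norm_num) (ZMod 2)) h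
  rw [map_intCast, map_ofNat, show (2 : ZMod 2) = 0 from rfl, zero_dvd_iff] at h2
  exact_mod_cast (ZMod.intCast_zmod_eq_zero_iff_dvd k 2).mp h2

variable {κ : Type*} [Fintype κ] [DecidableEq κ]

theorem det_eq_neg_one {A : Matrix (Fin 2) (Fin 2) (ZMod 4)} (hA : A.IsSymm)
    (hdiag : ∀ i, 2 ∣ A i i) (hodd : ¬ 2 ∣ A 0 1) : A.det = -1 := by
  rw [det_fin_two, hA.apply 0 1, mul_eq_zero_of_two_dvd (hdiag 0) (hdiag 1),
    mul_self_eq_one hodd, zero_sub]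

theorem exists_schur_complement {A : Matrix (Fin 2) (Fin 2) (ZMod 4)} (hA : A.IsSymm)
    (hAdiag : ∀ i, 2 ∣ A i i) (hodd : ¬ 2 ∣ A 0 1) (B : Matrix (Fin 2) κ (ZMod 4))
    {D : Matrix κ κ (ZMod 4)} (hD : D.IsSymm) (hDdiag : ∀ i, 2 ∣ D i i) :
    ∃ S : Matrix κ κ (ZMod 4), S.IsSymm ∧ (∀ i, 2 ∣ S i i) ∧
      (fromBlocks A B Bᵀ D).det = -S.det := by
  have hdetA := det_eq_neg_one hA hAdiag hodd
  have hinv : A * -A.adjugate = 1 := by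
    rw [mul_neg, mul_adjugate, hdetA, neg_one_smul, neg_neg]
  have hadj : A.adjugate.IsSymm := by
    rw [IsSymm, adjugate_transpose, hA]
  refine ⟨D + Bᵀ * A.adjugate * B, ?_, fun i => ?_, ?_⟩
  · rw [IsSymm, transpose_add, transpose_mul, transpose_mul, transpose_transpose, hD, hadj,
      Matrix.mul_assoc]
  · rw [Matrix.add_apply]
    refine dvd_add (hDdiag i) (two_dvd_transpose_mul_mul_diag hadj ?_ ?_ B i)
    · simpa [adjugate_fin_two] using hAdiag 1
    · simpa [adjugate_fin_two] using hAdiag 0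
  · rw [det_fromBlocks_of_mul_eq_one hinv, hdetA, Matrix.mul_neg, Matrix.neg_mul,
      sub_neg_eq_add, neg_one_mul]

theorem even_and_det_eq_neg_one_pow : ∀ {n : ℕ} (M : Matrix (Fin n) (Fin n) (ZMod 4)),
    M.IsSymm → (∀ i, 2 ∣ M i i) → ¬ 2 ∣ M.det → Even n ∧ M.det = (-1) ^ (n / 2)
  | 0, M, _, _, _ => ⟨Even.zero, by simp⟩
  | 1, M, _, hdiag, hdet => (hdet (by simpa [det_fin_one] using hdiag 0)).elim
  | m + 2, M, hM, hdiag, hdet => by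
    obtain ⟨j, hj⟩ : ∃ j, ¬ 2 ∣ M 0 j := by
      by_contra! h
      exact hdet (dvd_det_of_forall_dvd_row M 0 2 h)
    obtain ⟨e, he0, he1⟩ := Fin.exists_sum_fin_two_equiv fun h : j = 0 => hj (h ▸ hdiag 0)
    set N := M.submatrix e e
    have hN : N.IsSymm := by rw [IsSymm, transpose_submatrix, hM]
    obtain ⟨hA, hBC, -, hD⟩ := isSymm_fromBlocks_iff.mp ((fromBlocks_toBlocks N).symm ▸ hN)
    obtain ⟨S, hS, hSdiag, hdetS⟩ := exists_schur_complement hA (fun i => hdiag _)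
      (by simpa [N, toBlocks₁₁, he0, he1] using hj) N.toBlocks₁₂ hD (fun i => hdiag _)
    rw [hBC, fromBlocks_toBlocks, det_submatrix_equiv_self] at hdetS
    obtain ⟨hm, hdetS'⟩ := even_and_det_eq_neg_one_pow S hS hSdiag
      fun h => hdet (hdetS ▸ h.neg_right)
    refine ⟨hm.add even_two, ?_⟩
    rw [hdetS, hdetS', show (m + 2) / 2 = m / 2 + 1 by omega, pow_succ, mul_neg_one]

end ZMod4

theorem stmt_0_general (n : ℕ) (M : Matrix (Fin n) (Fin n) ℤ)
    (hsymm : M.IsSymm) (hdiag : ∀ i, Even (M i i)) (hdet : Odd M.det) :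
    Even n ∧ Int.ModEq 4 M.det ((-1) ^ (n / 2)) := by
  have hsymm₄ : (M.map (Int.cast : ℤ → ZMod 4)).IsSymm := by
    rw [IsSymm, ← transpose_map, hsymm]
  have hdiag₄ : ∀ i, 2 ∣ M.map (Int.cast : ℤ → ZMod 4) i i := fun i =>
    (ZMod4.two_dvd_intCast_iff _).mpr (even_iff_two_dvd.mp (hdiag i))
  have hdet₄ : ¬ 2 ∣ (M.map (Int.cast : ℤ → ZMod 4)).det := by
    rw [← Int.cast_det, ZMod4.two_dvd_intCast_iff, ← even_iff_two_dvd, Int.not_even_iff_odd]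
    exact hdet
  obtain ⟨hn, hdet_eq⟩ := ZMod4.even_and_det_eq_neg_one_pow _ hsymm₄ hdiag₄ hdet₄
  exact ⟨hn, (ZMod.intCast_eq_intCast_iff _ _ 4).mp (by push_cast; exact hdet_eq)⟩

/-- Let `n` be a positive integer and `M` a symmetric `n × n` integer matrix all of whose
diagonal entries are even and whose determinant is odd. Then `n` is even and
`det M ≡ (-1)^(n/2) (mod 4)`. -/
theorem stmt_0 (n : ℕ) (hn : 0 < n) (M : Matrix (Fin n) (Fin n) ℤ)
    (hsymm : M.IsSymm) (hdiag : ∀ i, Even (M i i)) (hdet : Odd M.det) :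
    Even n ∧ Int.ModEq 4 M.det ((-1) ^ (n / 2)) :=
  stmt_0_general n M hsymm hdiag hdet
end

section
/- Let p be a prime and let B be an n×n rational matrix such that ord_p(B_{ij}) ≥ 0 for all i ≠ j and ord_p(B_{ii}) ≥ −g_i for non-negative integers g_1,…,g_n. Let adj(B) denote the adjugate matrix of B. Then for all i ≠ j, the (i,j)-entry of adj(B) satisfies ord_p(adj(B)_{ij}) ≥ −(g_1+…+g_n) + g_i + g_j, and for each i, the diagonal entry satisfies ord_p(adj(B)_{ii}) ≥ −(g_1+…+g_n) + g_i. -/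
/-!
By Leibniz, `adj(B) i j = det N`, where `N` is `B` with row `j` replaced by `eᵢ` and column `i`
replaced by `eⱼ`: only permutations with `σ i = j` contribute, and for those the column change is
invisible. The point of clearing column `i` is that `N` keeps no diagonal entry of `B` in rows
`i` and `j`, so those rows are integral, while each other row `k` has valuation `≥ -g k`. Every
Leibniz term of `det N` picks one entry from each row, so its valuation is at least the sum of
these row bounds, `-∑_{k ∉ {i, j}} g k`.
-/

open Matrix

/-- The `p`-adic valuation on `ℚ`, with `ordp p 0 = ⊤`. -/
noncomputable def ordp (p : ℕ) (z : ℚ) : WithTop ℤ :=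
  if z = 0 then ⊤ else (padicValRat p z : WithTop ℤ)

open Finset

namespace AddValuation

variable {R Γ : Type*} [CommRing R] [LinearOrderedAddCommMonoidWithTop Γ] (v : AddValuation R Γ)

theorem map_prod {ι : Type*} (s : Finset ι) (f : ι → R) :
    v (∏ i ∈ s, f i) = ∑ i ∈ s, v (f i) := by
  induction s using cons_induction with
  | empty => simp
  | cons a s ha ih => rw [prod_cons, sum_cons, v.map_mul, ih]

theorem sum_le_map_det {n : Type*} [Fintype n] [DecidableEq n] (M : Matrix n n R) (c : n → Γ)
    (h : ∀ a b, c a ≤ v (M a b)) : ∑ a, c a ≤ v M.det := by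
  rw [det_apply]
  refine v.map_le_sum fun σ _ => ?_
  have hsign : v (Equiv.Perm.sign σ • ∏ k, M (σ k) k) = v (∏ k, M (σ k) k) := by
    rcases Int.units_eq_one_or (Equiv.Perm.sign σ) with h | h <;> simp [h, Units.smul_def]
  calc ∑ a, c a = ∑ k, c (σ k) := (Equiv.sum_comp σ c).symm
    _ ≤ ∑ k, v (M (σ k) k) := sum_le_sum fun k _ => h _ _
    _ = v (Equiv.Perm.sign σ • ∏ k, M (σ k) k) := by rw [hsign, map_prod]

end AddValuation

namespace Matrix

variable {R n : Type*} [CommRing R] [Fintype n] [DecidableEq n]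

theorem adjugate_apply_eq_det_updateRow_updateCol (A : Matrix n n R) (i j : n) :
    adjugate A i j = ((A.updateCol i (Pi.single j 1)).updateRow j (Pi.single i 1)).det := by
  rw [adjugate_apply, det_apply, det_apply]
  refine sum_congr rfl fun σ _ => ?_
  by_cases hσ : σ i = j
  · congr 2 with k
    by_cases hk : k = i
    · simp [hk, hσ]
    · have : σ k ≠ j := fun h => hk (σ.injective (h.trans hσ.symm))
      simp [updateRow_ne this, updateCol_ne hk]
  · have hj : σ.symm j ≠ i := fun h => hσ (by rw [← h, Equiv.apply_symm_apply])
    have hzero : ∀ M : Matrix n n R, M j = Pi.single i 1 → ∏ k, M (σ k) k = 0 := fun M hM =>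
      prod_eq_zero (mem_univ (σ.symm j)) (by simp [hM, Pi.single_eq_of_ne hj])
    rw [hzero _ (updateRow_self ..), hzero _ (updateRow_self ..)]

end Matrix

noncomputable def ordpAddValuation (p : ℕ) [Fact p.Prime] : AddValuation ℚ (WithTop ℤ) :=
  Padic.addValuation.comap (Rat.castHom ℚ_[p])

@[simp]
theorem ordpAddValuation_apply (p : ℕ) [Fact p.Prime] (x : ℚ) :
    ordpAddValuation p x = ordp p x := by
  by_cases hx : x = 0
  · simp [hx, ordp]
  · change Padic.addValuation (x : ℚ_[p]) = _
    simp [ordp, hx, Padic.valuation_ratCast]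

theorem AddValuation.le_map_adjugate_apply {R n : Type*} [CommRing R] [Fintype n]
    [DecidableEq n] (v : AddValuation R (WithTop ℤ)) (B : Matrix n n R) (g : n → ℕ)
    (hoff : ∀ a b, a ≠ b → 0 ≤ v (B a b))
    (hdiag : ∀ a, ((-(g a) : ℤ) : WithTop ℤ) ≤ v (B a a)) (i j : n) :
    ((-(∑ k ∈ univ \ {i, j}, (g k : ℤ)) : ℤ) : WithTop ℤ) ≤ v (B.adjugate i j) := by
  set c : n → ℤ := fun a => if a ∈ ({i, j} : Finset n) then 0 else -(g a)
  have hc_nonpos : ∀ a, c a ≤ 0 := fun a => by simp only [c]; split_ifs <;> simp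
  have hsum : ∑ a, c a = -(∑ k ∈ univ \ {i, j}, (g k : ℤ)) := by
    rw [← sum_subset (subset_univ (univ \ {i, j})) fun a _ ha => by simp_all [c],
      ← sum_neg_distrib]
    exact sum_congr rfl fun a ha => by simp_all [c]
  rw [← hsum, WithTop.coe_sum, adjugate_apply_eq_det_updateRow_updateCol]
  refine v.sum_le_map_det _ _ fun a b => ?_
  rcases eq_or_ne a j with rfl | haj
  · refine le_trans (WithTop.coe_le_coe.2 (hc_nonpos a)) ?_
    rw [updateRow_self, Pi.single_apply]
    split_ifs <;> simp
  rw [updateRow_ne haj]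
  rcases eq_or_ne b i with rfl | hbi
  · simp [Pi.single_eq_of_ne haj]
  rw [updateCol_ne hbi]
  rcases eq_or_ne a b with rfl | hab
  · simpa [c, haj, hbi] using hdiag a
  · exact le_trans (WithTop.coe_le_coe.2 (hc_nonpos a)) (hoff a b hab)

/-- Let `p` be a prime and `B` an `n × n` rational matrix with `ord_p(B i j) ≥ 0` for `i ≠ j`
and `ord_p(B i i) ≥ -g i` for non-negative integers `g i`. Then the adjugate of `B` satisfies
`ord_p(adj(B) i j) ≥ -(g 1 + … + g n) + g i + g j` for `i ≠ j` and
`ord_p(adj(B) i i) ≥ -(g 1 + … + g n) + g i`. -/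
theorem stmt_10 (p : ℕ) (hp : p.Prime) (n : ℕ) (B : Matrix (Fin n) (Fin n) ℚ)
    (g : Fin n → ℕ)
    (hoff : ∀ i j : Fin n, i ≠ j → (0 : WithTop ℤ) ≤ ordp p (B i j))
    (hdiag : ∀ i : Fin n, ((-(g i : ℤ) : ℤ) : WithTop ℤ) ≤ ordp p (B i i)) :
    (∀ i j : Fin n, i ≠ j →
      (((-(∑ l : Fin n, (g l : ℤ)) + (g i : ℤ) + (g j : ℤ)) : ℤ) : WithTop ℤ) ≤
        ordp p (B.adjugate i j)) ∧
    (∀ i : Fin n,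
      (((-(∑ l : Fin n, (g l : ℤ)) + (g i : ℤ)) : ℤ) : WithTop ℤ) ≤
        ordp p (B.adjugate i i)) := by
  have : Fact p.Prime := ⟨hp⟩
  simp only [← ordpAddValuation_apply] at hoff hdiag ⊢
  have key := (ordpAddValuation p).le_map_adjugate_apply B g hoff hdiag
  refine ⟨fun i j hij => ?_, fun i => ?_⟩
  · convert key i j using 3
    rw [sum_sdiff_eq_sub (subset_univ _), sum_pair hij]
    ring
  · convert key i i using 3
    rw [pair_eq_singleton, sum_sdiff_eq_sub (subset_univ _), sum_singleton]
    ring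
end

section
/- Let p be an odd prime and let M be a symmetric n×n integer matrix. Let d be the dimension over 𝔽_p of the kernel of the reduction of M modulo p. Then there exists an n×n integer matrix T with det T = ±1 such that T·M·Tᵀ has the following shape: its upper left (n−d)×(n−d) submatrix N has determinant not divisible by p, and all entries of T·M·Tᵀ outside of N are divisible by p (i.e., modulo p, T·M·Tᵀ equals the block sum of N and a d×d zero matrix). -/
open Matrix

/-- The dimension over `𝔽_p` of the kernel of the reduction of an integer matrix modulo `p`. -/
noncomputable def kerDimModP (p : ℕ) {n : ℕ} (M : Matrix (Fin n) (Fin n) ℤ) : ℕ :=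
  Module.finrank (ZMod p)
    (LinearMap.ker (Matrix.mulVecLin (M.map (Int.cast : ℤ → ZMod p))))

/-- The upper left `r × r` submatrix of an `n × n` matrix, for `r ≤ n`. -/
def upperLeft {n : ℕ} (M : Matrix (Fin n) (Fin n) ℤ) (r : ℕ) (h : r ≤ n) :
    Matrix (Fin r) (Fin r) ℤ :=
  M.submatrix (Fin.castLE h) (Fin.castLE h)

/-! Reduce modulo `p`. Take an invertible matrix over `𝔽_p` whose last `d` rows lie in the
kernel of `M mod p`. Every invertible matrix over a field is a diagonal matrix times a product of
transvections, and transvections lift to `SL_n(ℤ)`; so after rescaling its rows that matrix is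
the reduction of some `T` with `det T = 1`. Because `M mod p` is symmetric, the last `d` rows and
columns of `T M Tᵀ mod p` vanish, and since it still has rank `n - d`, its upper left block is
invertible. -/

section Transvections

variable {ι : Type*} [Fintype ι] [DecidableEq ι]

theorem exists_det_eq_one_mapMatrix_eq_transvec_prod {R S : Type*} [CommRing R] [CommRing S]
    (f : R →+* S) (hf : Function.Surjective f) (L : List (TransvectionStruct ι S)) :
    ∃ A : Matrix ι ι R, A.det = 1 ∧ f.mapMatrix A = (L.map TransvectionStruct.toMatrix).prod := by
  induction L with
  | nil => exact ⟨1, det_one, map_one _⟩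
  | cons t L ih =>
    obtain ⟨A, hdet, hA⟩ := ih
    obtain ⟨i, j, hij, c⟩ := t
    obtain ⟨c, rfl⟩ := hf c
    refine ⟨transvection i j c * A, by rw [det_mul, det_transvection_of_ne _ _ hij, hdet, one_mul],
      ?_⟩
    rw [map_mul, hA, List.map_cons, List.prod_cons]
    congr 1
    ext k l
    simp [transvection, TransvectionStruct.toMatrix, Matrix.one_apply, Matrix.single_apply,
      apply_ite f]

variable {F : Type*} [Field F]

theorem diagonal_mul_diagonal_inv {D : ι → F} (hD : ∀ i, D i ≠ 0) :
    diagonal D * diagonal D⁻¹ = 1 := by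
  rw [diagonal_mul_diagonal, ← diagonal_one]
  exact congrArg diagonal (funext fun i => mul_inv_cancel₀ (hD i))

theorem diagonal_mul_transvection_mul_diagonal_inv {D : ι → F} (hD : ∀ i, D i ≠ 0) (i j : ι)
    (c : F) :
    diagonal D * transvection i j c * diagonal D⁻¹ = transvection i j (D i * c * (D j)⁻¹) := by
  ext k l
  simp only [transvection, Matrix.mul_add, mul_one, mul_diagonal, Matrix.add_apply,
    diagonal_apply, diagonal_mul, single_apply, mul_ite, mul_zero, Pi.inv_apply, Matrix.one_apply]
  split_ifs <;> simp_all [add_mul]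

theorem exists_transvec_prod_eq_diagonal_mul_transvec_prod_mul_diagonal_inv {D : ι → F}
    (hD : ∀ i, D i ≠ 0) (L : List (TransvectionStruct ι F)) :
    ∃ L' : List (TransvectionStruct ι F), diagonal D * (L.map TransvectionStruct.toMatrix).prod *
      diagonal D⁻¹ = (L'.map TransvectionStruct.toMatrix).prod := by
  induction L with
  | nil => exact ⟨[], by simpa using diagonal_mul_diagonal_inv hD⟩
  | cons t L ih =>
    obtain ⟨L', hL'⟩ := ih
    refine ⟨⟨t.i, t.j, t.hij, D t.i * t.c * (D t.j)⁻¹⟩ :: L', ?_⟩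
    have hDD : diagonal D⁻¹ * diagonal D = 1 := by
      simpa using diagonal_mul_diagonal_inv (D := D⁻¹) (fun i => inv_ne_zero (hD i))
    simp only [List.map_cons, List.prod_cons, ← hL']
    calc diagonal D * (t.toMatrix * (L.map TransvectionStruct.toMatrix).prod) * diagonal D⁻¹
        = (diagonal D * t.toMatrix * diagonal D⁻¹) *
            (diagonal D * (L.map TransvectionStruct.toMatrix).prod * diagonal D⁻¹) := by
          simp only [Matrix.mul_assoc]
          rw [← Matrix.mul_assoc (diagonal D⁻¹) (diagonal D), hDD, Matrix.one_mul]
      _ = _ := by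
          rw [TransvectionStruct.toMatrix, diagonal_mul_transvection_mul_diagonal_inv hD]
          rfl

theorem exists_diagonal_mul_transvec_prod {B : Matrix ι ι F} (hB : B.det ≠ 0) :
    ∃ D : ι → F, (∀ i, D i ≠ 0) ∧ ∃ L : List (TransvectionStruct ι F),
      B = diagonal D * (L.map TransvectionStruct.toMatrix).prod := by
  obtain ⟨L₁, L₂, D, rfl⟩ := Pivot.exists_list_transvec_mul_diagonal_mul_list_transvec B
  have hD : ∀ i, D i ≠ 0 := by
    intro i hi
    apply hB
    simp [det_mul, det_diagonal, Finset.prod_eq_zero (Finset.mem_univ i) hi]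
  -- `L₁ D L₂ = D (D⁻¹ L₁ D) L₂`, and conjugating by a diagonal matrix preserves transvections.
  obtain ⟨L, hL⟩ := exists_transvec_prod_eq_diagonal_mul_transvec_prod_mul_diagonal_inv
    (D := D⁻¹) (fun i => inv_ne_zero (hD i)) L₁
  refine ⟨D, hD, L ++ L₂, ?_⟩
  rw [List.map_append, List.prod_append, ← hL, inv_inv]
  simp only [← Matrix.mul_assoc]
  rw [diagonal_mul_diagonal_inv hD, Matrix.one_mul]

theorem exists_det_ne_zero_rows_mem (K : Submodule F (ι → F)) (s : Finset ι)
    (hs : s.card = Module.finrank F K) : ∃ B : Matrix ι ι F, B.det ≠ 0 ∧ ∀ i ∈ s, B i ∈ K := by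
  obtain ⟨C, hKC⟩ := K.exists_isCompl
  have hC : Fintype.card {i // i ∉ s} = Module.finrank F C := by
    have := Submodule.finrank_add_eq_of_isCompl hKC
    simp only [Module.finrank_fintype_fun_eq_card] at this
    rw [Fintype.card_subtype_compl, Fintype.card_coe]
    omega
  let bK : Module.Basis {i // i ∈ s} F K :=
    (Module.finBasisOfFinrankEq F K hs.symm).reindex (Fintype.equivFinOfCardEq (by simp)).symm
  let bC : Module.Basis {i // i ∉ s} F C :=
    (Module.finBasisOfFinrankEq F C hC.symm).reindex (Fintype.equivFinOfCardEq rfl).symm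
  let b : Module.Basis ι F (ι → F) :=
    ((bK.prod bC).map (Submodule.prodEquivOfIsCompl K C hKC)).reindex (Equiv.sumCompl (· ∈ s))
  refine ⟨Matrix.of b, ?_, fun i hi => ?_⟩
  · have hb : (Matrix.of b)ᵀ = (Pi.basisFun F ι).toMatrix b := by
      ext i j
      simp [Module.Basis.toMatrix_apply]
    rw [← det_transpose, hb, ← Module.Basis.det_apply]
    exact ((Pi.basisFun F ι).isUnit_det b).ne_zero
  · change b i ∈ K
    simp [b, Module.Basis.reindex_apply, Equiv.sumCompl_symm_apply_of_pos hi]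

theorem exists_det_eq_one_mapMatrix_rows_mem {R : Type*} [CommRing R] (f : R →+* F)
    (hf : Function.Surjective f) (K : Submodule F (ι → F)) (s : Finset ι)
    (hs : s.card = Module.finrank F K) :
    ∃ A : Matrix ι ι R, A.det = 1 ∧ ∀ i ∈ s, f.mapMatrix A i ∈ K := by
  obtain ⟨B, hB, hBK⟩ := exists_det_ne_zero_rows_mem K s hs
  obtain ⟨D, hD, L, rfl⟩ := exists_diagonal_mul_transvec_prod hB
  obtain ⟨A, hA, hAL⟩ := exists_det_eq_one_mapMatrix_eq_transvec_prod f hf L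
  refine ⟨A, hA, fun i hi => ?_⟩
  have hrow : (diagonal D * f.mapMatrix A) i = D i • f.mapMatrix A i := by
    ext j
    simp [diagonal_mul]
  have hDrow := K.smul_mem (D i)⁻¹ (hBK i hi)
  rwa [← hAL, hrow, smul_smul, inv_mul_cancel₀ (hD i), one_smul] at hDrow

end Transvections

section Rank

variable {F : Type*} [Field F]

theorem rank_add_finrank_ker_mulVecLin {m n : Type*} [Fintype n] (A : Matrix m n F) :
    A.rank + Module.finrank F (LinearMap.ker A.mulVecLin) = Fintype.card n := by
  rw [rank, LinearMap.finrank_range_add_finrank_ker, Module.finrank_fintype_fun_eq_card]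

theorem det_ne_zero_of_rank_eq_card {m : Type*} [Fintype m] [DecidableEq m] (A : Matrix m m F)
    (hA : A.rank = Fintype.card m) : A.det ≠ 0 := by
  have hker := rank_add_finrank_ker_mulVecLin A
  rw [hA, Nat.add_eq_left, Submodule.finrank_eq_zero] at hker
  intro hdet
  obtain ⟨v, hv0, hv⟩ := exists_mulVec_eq_zero_iff.mpr hdet
  exact hv0 ((Submodule.mem_bot F).mp (hker ▸ LinearMap.mem_ker.mpr hv))

theorem rank_le_rank_submatrix_of_row_eq_zero {m n m₀ : Type*} [Fintype m] [Fintype n]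
    [Fintype m₀] (A : Matrix m n F) (e : m₀ → m) (he : ∀ i ∉ Set.range e, A i = 0) :
    A.rank ≤ (A.submatrix e id).rank := by
  rw [rank_eq_finrank_span_row, rank_eq_finrank_span_row]
  apply Submodule.finrank_mono
  rw [Submodule.span_le]
  rintro _ ⟨i, rfl⟩
  by_cases hi : i ∈ Set.range e
  · obtain ⟨k, rfl⟩ := hi
    exact Submodule.subset_span ⟨k, rfl⟩
  · simp [Matrix.row, he i hi]

theorem rank_le_rank_submatrix_of_eq_zero {m m₀ : Type*} [Fintype m] [Fintype m₀]
    (A : Matrix m m F) (e : m₀ → m)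
    (he : ∀ i j, (i ∉ Set.range e ∨ j ∉ Set.range e) → A i j = 0) :
    A.rank ≤ (A.submatrix e e).rank :=
  calc A.rank ≤ (A.submatrix e id).rank :=
        rank_le_rank_submatrix_of_row_eq_zero A e fun i hi => funext fun j => he i j (.inl hi)
    _ = (A.submatrix e id)ᵀ.rank := (rank_transpose _).symm
    _ ≤ ((A.submatrix e id)ᵀ.submatrix e id).rank :=
        rank_le_rank_submatrix_of_row_eq_zero _ e fun j hj => funext fun i => he _ j (.inr hj)
    _ = (A.submatrix e e).rank := by rw [← transpose_submatrix, rank_transpose]; rfl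

theorem rank_mul_mul_transpose_of_isUnit_det {m : Type*} [Fintype m] [DecidableEq m]
    (A P : Matrix m m F) (hP : IsUnit P.det) : (P * A * Pᵀ).rank = A.rank := by
  rw [rank_mul_eq_left_of_isUnit_det _ _ (by rwa [det_transpose]),
    rank_mul_eq_right_of_isUnit_det _ _ hP]

theorem det_submatrix_castLE_ne_zero {n r : ℕ} (hrn : r ≤ n) (A : Matrix (Fin n) (Fin n) F)
    (hA : ∀ i j : Fin n, (r ≤ (i : ℕ) ∨ r ≤ (j : ℕ)) → A i j = 0) (hrank : A.rank = r) :
    (A.submatrix (Fin.castLE hrn) (Fin.castLE hrn)).det ≠ 0 := by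
  refine det_ne_zero_of_rank_eq_card _ (le_antisymm (rank_le_card_height _) ?_)
  calc Fintype.card (Fin r) = A.rank := by rw [hrank, Fintype.card_fin]
    _ ≤ _ := rank_le_rank_submatrix_of_eq_zero _ _ fun i j hij => hA i j (by
      simpa [Fin.range_castLE] using hij)

end Rank

section Symmetric

variable {ι R : Type*} [Fintype ι] [CommRing R]

theorem Matrix.IsSymm.mul_mul_transpose {A : Matrix ι ι R} (hA : A.IsSymm) (P : Matrix ι ι R) :
    (P * A * Pᵀ).IsSymm := by
  rw [IsSymm, transpose_mul, transpose_mul, transpose_transpose, hA.eq, Matrix.mul_assoc]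

theorem mul_mul_transpose_apply_eq_zero {A : Matrix ι ι R} (hA : A.IsSymm) (P : Matrix ι ι R)
    {i j : ι} (h : A *ᵥ P i = 0 ∨ A *ᵥ P j = 0) : (P * A * Pᵀ) i j = 0 := by
  rcases h with h | h
  · rw [← (hA.mul_mul_transpose P).apply, mul_mul_apply, transpose_transpose, h, dotProduct_zero]
  · rw [mul_mul_apply, transpose_transpose, h, dotProduct_zero]

end Symmetric

open Finset in
theorem Fin.card_filter_sub_le_val {n d : ℕ} (h : d ≤ n) : #{i : Fin n | n - d ≤ (i : ℕ)} = d := by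
  have := Finset.card_filter_add_card_filter_not (s := Finset.univ)
    (fun i : Fin n => (i : ℕ) < n - d)
  simp only [Fin.card_filter_val_lt, not_lt, Finset.card_univ, Fintype.card_fin] at this
  omega

theorem stmt_12_general (p n : ℕ) [Fact p.Prime]
    (M : Matrix (Fin n) (Fin n) ℤ) (hsymm : M.IsSymm)
    (d : ℕ) (hd : d = kerDimModP p M) :
    d ≤ n ∧
    ∃ T : Matrix (Fin n) (Fin n) ℤ, (T.det = 1 ∨ T.det = -1) ∧
      ¬ (p : ℤ) ∣ (upperLeft (T * M * Tᵀ) (n - d) (Nat.sub_le n d)).det ∧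
      ∀ i j : Fin n, (n - d ≤ (i : ℕ) ∨ n - d ≤ (j : ℕ)) → (p : ℤ) ∣ (T * M * Tᵀ) i j := by
  set f := Int.castRingHom (ZMod p)
  set K := LinearMap.ker (f.mapMatrix M).mulVecLin
  have hdn : d ≤ n := hd ▸ (Submodule.finrank_le K).trans_eq (Module.finrank_fin_fun _)
  have hrankM : (f.mapMatrix M).rank = n - d := by
    have := rank_add_finrank_ker_mulVecLin (f.mapMatrix M)
    rw [Fintype.card_fin, ← show d = Module.finrank (ZMod p) K from hd] at this
    omega
  obtain ⟨T, hTdet, hTK⟩ := exists_det_eq_one_mapMatrix_rows_mem f ZMod.intCast_surjective K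
    {i | n - d ≤ (i : ℕ)} (by rw [Fin.card_filter_sub_le_val hdn]; exact hd)
  set G := f.mapMatrix (T * M * Tᵀ)
  have hGrank : G.rank = n - d := by
    rw [show G = f.mapMatrix T * f.mapMatrix M * (f.mapMatrix T)ᵀ by simp [G, transpose_map],
      rank_mul_mul_transpose_of_isUnit_det _ _
        (by rw [← RingHom.map_det, hTdet, map_one]; exact isUnit_one), hrankM]
  have hG : ∀ i j : Fin n, (n - d ≤ (i : ℕ) ∨ n - d ≤ (j : ℕ)) → G i j = 0 := by
    intro i j hij
    simp only [G, map_mul, RingHom.mapMatrix_apply, transpose_map]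
    exact mul_mul_transpose_apply_eq_zero (hsymm.map _) _
      (hij.imp (fun hi => hTK i (by simpa using hi)) (fun hj => hTK j (by simpa using hj)))
  refine ⟨hdn, T, .inl hTdet, ?_,
    fun i j hij => (ZMod.intCast_zmod_eq_zero_iff_dvd _ p).mp (hG i j hij)⟩
  rw [← ZMod.intCast_zmod_eq_zero_iff_dvd]
  exact (RingHom.map_det f _).trans_ne (det_submatrix_castLE_ne_zero _ G hG hGrank)

/-- Let `p` be an odd prime and `M` a symmetric `n × n` integer matrix, and let `d` be the
dimension of the kernel of `M` modulo `p`. Then there is a unimodular integer matrix `T` such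
that the upper left `(n-d) × (n-d)` submatrix `N` of `T * M * Tᵀ` has determinant not divisible
by `p`, while all entries of `T * M * Tᵀ` outside of `N` are divisible by `p`. -/
theorem stmt_12 (p n : ℕ) [Fact p.Prime] (hp2 : p ≠ 2)
    (M : Matrix (Fin n) (Fin n) ℤ) (hsymm : M.IsSymm)
    (d : ℕ) (hd : d = kerDimModP p M) :
    d ≤ n ∧
    ∃ T : Matrix (Fin n) (Fin n) ℤ, (T.det = 1 ∨ T.det = -1) ∧
      ¬ (p : ℤ) ∣ (upperLeft (T * M * Tᵀ) (n - d) (Nat.sub_le n d)).det ∧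
      ∀ i j : Fin n, (n - d ≤ (i : ℕ) ∨ n - d ≤ (j : ℕ)) → (p : ℤ) ∣ (T * M * Tᵀ) i j :=
  stmt_12_general p n M hsymm d hd
end

section
/- Let p be an odd prime and let M be a symmetric n×n integer matrix. Suppose T₁ and T₂ are n×n integer matrices with det T₁ = ±1 and det T₂ = ±1, and r₁, r₂ ∈ {0,…,n} are such that, for each a ∈ {1,2}, the upper left r_a×r_a submatrix N_a of T_a·M·T_aᵀ has determinant not divisible by p while all entries of T_a·M·T_aᵀ outside of N_a are divisible by p. Then r₁ = r₂ and the Legendre symbols satisfy (det N₁ | p) = (det N₂ | p). -/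
/-! Reduce modulo `p` and put `U = T₂ T₁⁻¹`, so that `A₂ = U A₁ Uᵀ` for the reductions `Aₐ` of
`Tₐ M Tₐᵀ`. Since `A₁` vanishes outside its upper left block `N₁`, the upper left `r₂ × r₂` block of
`A₂` factors as `N₂ = C N₁ Cᵀ`, where `C` is the upper left `r₂ × r₁` block of `U`. Invertibility of
`N₂` forces `r₂ ≤ rank C ≤ r₁`, and by symmetry `r₁ = r₂`. Then `C` is square and
`det N₂ = (det C)² det N₁`, so both determinants have the same quadratic character. -/

open Matrix

namespace Matrix

theorem submatrix_mul_mul_of_eq_zero {R m m' o o' : Type*} [NonUnitalNonAssocSemiring R]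
    {n r : ℕ} (h : r ≤ n) {A : Matrix (Fin n) (Fin n) R}
    (hA : ∀ i j : Fin n, (r ≤ (i : ℕ) ∨ r ≤ (j : ℕ)) → A i j = 0)
    (B : Matrix m (Fin n) R) (C : Matrix (Fin n) o R) (f : m' → m) (g : o' → o) :
    (B * A * C).submatrix f g =
      B.submatrix f (Fin.castLE h) * A.submatrix (Fin.castLE h) (Fin.castLE h) *
        C.submatrix (Fin.castLE h) g := by
  have le_of_notMem_range {i : Fin n} (hi : i ∉ Set.range (Fin.castLE h)) : r ≤ i := by
    simpa [Fin.range_castLE] using hi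
  ext i j
  simp only [submatrix_apply, mul_apply]
  refine (Fintype.sum_of_injective _ (Fin.castLE_injective h) _ _ (fun l hl => ?_)
    (fun l => ?_)).symm
  · simp [hA _ _ (Or.inr (le_of_notMem_range hl))]
  · congr 1
    refine Fintype.sum_of_injective _ (Fin.castLE_injective h) _ _ (fun k hk => ?_) (fun _ => rfl)
    simp [hA _ _ (Or.inl (le_of_notMem_range hk))]

theorem le_of_det_mul_ne_zero {K : Type*} [Field K] {m n : ℕ} (C : Matrix (Fin m) (Fin n) K)
    (D : Matrix (Fin n) (Fin m) K) (hdet : (C * D).det ≠ 0) : m ≤ n :=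
  calc m = (C * D).rank := by
        rw [rank_of_isUnit _ ((isUnit_iff_isUnit_det _).mpr hdet.isUnit), Fintype.card_fin]
    _ ≤ C.rank := rank_mul_le_left C D
    _ ≤ n := by simpa using C.rank_le_card_width

theorem mul_inv_mul_mul_transpose {R m : Type*} [CommRing R] [Fintype m] [DecidableEq m]
    {S : Matrix m m R} (hS : IsUnit S.det) (T M : Matrix m m R) :
    T * S⁻¹ * (S * M * Sᵀ) * (T * S⁻¹)ᵀ = T * M * Tᵀ := by
  rw [transpose_mul, transpose_nonsing_inv]
  calc T * S⁻¹ * (S * M * Sᵀ) * (Sᵀ⁻¹ * Tᵀ) = T * (S⁻¹ * S) * M * (Sᵀ * Sᵀ⁻¹) * Tᵀ := by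
        simp only [Matrix.mul_assoc]
    _ = T * M * Tᵀ := by
        rw [nonsing_inv_mul _ hS, mul_nonsing_inv _ (by rwa [det_transpose]), Matrix.mul_one,
          Matrix.mul_one]

end Matrix

section Reduction

variable {p : ℕ} [Fact p.Prime] {n r₁ r₂ : ℕ}

theorem intCast_det_upperLeft_mul_mul_transpose (h₁ : r₁ ≤ n) (h₂ : r₂ ≤ n)
    {A : Matrix (Fin n) (Fin n) ℤ}
    (hA : ∀ i j : Fin n, (r₁ ≤ (i : ℕ) ∨ r₁ ≤ (j : ℕ)) → (p : ℤ) ∣ A i j)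
    (U : Matrix (Fin n) (Fin n) ℤ) :
    ((upperLeft (U * A * Uᵀ) r₂ h₂).det : ZMod p) =
      ((U.map (Int.castRingHom (ZMod p))).submatrix (Fin.castLE h₂) (Fin.castLE h₁) *
        (upperLeft A r₁ h₁).map (Int.castRingHom (ZMod p)) *
          ((U.map (Int.castRingHom (ZMod p))).submatrix (Fin.castLE h₂) (Fin.castLE h₁))ᵀ).det := by
  have hA' : ∀ i j : Fin n, (r₁ ≤ (i : ℕ) ∨ r₁ ≤ (j : ℕ)) →
      A.map (Int.castRingHom (ZMod p)) i j = 0 :=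
    fun i j hij => (ZMod.intCast_zmod_eq_zero_iff_dvd _ p).mpr (hA i j hij)
  rw [← eq_intCast (Int.castRingHom (ZMod p)), RingHom.map_det, RingHom.mapMatrix_apply,
    upperLeft, ← submatrix_map, Matrix.map_mul, Matrix.map_mul, transpose_map,
    submatrix_mul_mul_of_eq_zero h₁ hA', ← transpose_submatrix]
  rfl

theorem le_of_not_dvd_det_upperLeft (h₁ : r₁ ≤ n) (h₂ : r₂ ≤ n) {A : Matrix (Fin n) (Fin n) ℤ}
    (hA : ∀ i j : Fin n, (r₁ ≤ (i : ℕ) ∨ r₁ ≤ (j : ℕ)) → (p : ℤ) ∣ A i j)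
    (U : Matrix (Fin n) (Fin n) ℤ) (hdet : ¬ (p : ℤ) ∣ (upperLeft (U * A * Uᵀ) r₂ h₂).det) :
    r₂ ≤ r₁ := by
  rw [← ZMod.intCast_zmod_eq_zero_iff_dvd, intCast_det_upperLeft_mul_mul_transpose h₁ h₂ hA,
    Matrix.mul_assoc] at hdet
  exact le_of_det_mul_ne_zero _ _ hdet

theorem legendreSym_det_upperLeft_mul_mul_transpose {r : ℕ} (h : r ≤ n)
    {A : Matrix (Fin n) (Fin n) ℤ}
    (hA : ∀ i j : Fin n, (r ≤ (i : ℕ) ∨ r ≤ (j : ℕ)) → (p : ℤ) ∣ A i j)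
    (U : Matrix (Fin n) (Fin n) ℤ) (hdet : ¬ (p : ℤ) ∣ (upperLeft (U * A * Uᵀ) r h).det) :
    legendreSym p (upperLeft (U * A * Uᵀ) r h).det = legendreSym p (upperLeft A r h).det := by
  rw [← ZMod.intCast_zmod_eq_zero_iff_dvd, intCast_det_upperLeft_mul_mul_transpose h h hA,
    det_mul, det_mul, det_transpose] at hdet
  rw [legendreSym, legendreSym, intCast_det_upperLeft_mul_mul_transpose h h hA, det_mul, det_mul,
    det_transpose, ← eq_intCast (Int.castRingHom (ZMod p)) (upperLeft A r h).det,
    RingHom.map_det, RingHom.mapMatrix_apply, map_mul, map_mul, mul_right_comm,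
    ← sq, quadraticChar_sq_one (left_ne_zero_of_mul (left_ne_zero_of_mul hdet)), one_mul]

end Reduction

theorem stmt_13_general (p n : ℕ) [Fact p.Prime]
    (M : Matrix (Fin n) (Fin n) ℤ)
    (T₁ T₂ : Matrix (Fin n) (Fin n) ℤ)
    (hT₁ : T₁.det = 1 ∨ T₁.det = -1) (hT₂ : T₂.det = 1 ∨ T₂.det = -1)
    (r₁ r₂ : ℕ) (hr₁ : r₁ ≤ n) (hr₂ : r₂ ≤ n)
    (hN₁ : ¬ (p : ℤ) ∣ (upperLeft (T₁ * M * T₁ᵀ) r₁ hr₁).det)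
    (hout₁ : ∀ i j : Fin n, (r₁ ≤ (i : ℕ) ∨ r₁ ≤ (j : ℕ)) → (p : ℤ) ∣ (T₁ * M * T₁ᵀ) i j)
    (hN₂ : ¬ (p : ℤ) ∣ (upperLeft (T₂ * M * T₂ᵀ) r₂ hr₂).det)
    (hout₂ : ∀ i j : Fin n, (r₂ ≤ (i : ℕ) ∨ r₂ ≤ (j : ℕ)) → (p : ℤ) ∣ (T₂ * M * T₂ᵀ) i j) :
    r₁ = r₂ ∧
      legendreSym p (upperLeft (T₁ * M * T₁ᵀ) r₁ hr₁).det =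
        legendreSym p (upperLeft (T₂ * M * T₂ᵀ) r₂ hr₂).det := by
  have h₁₂ := mul_inv_mul_mul_transpose (Int.isUnit_iff.mpr hT₁) T₂ M
  have h₂₁ := mul_inv_mul_mul_transpose (Int.isUnit_iff.mpr hT₂) T₁ M
  rw [← h₁₂] at hN₂ ⊢
  rw [← h₂₁] at hN₁
  obtain rfl : r₁ = r₂ := le_antisymm (le_of_not_dvd_det_upperLeft hr₂ hr₁ hout₂ _ hN₁)
    (le_of_not_dvd_det_upperLeft hr₁ hr₂ hout₁ _ hN₂)
  exact ⟨rfl, (legendreSym_det_upperLeft_mul_mul_transpose hr₁ hout₁ _ hN₂).symm⟩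

/-- Well-definedness of the singular determinant: if `T₁, T₂` are unimodular integer matrices
such that, modulo the odd prime `p`, `T_a * M * T_aᵀ` is the block sum of an `r_a × r_a` matrix
`N_a` with `p ∤ det N_a` and a zero matrix, then `r₁ = r₂` and
`(det N₁ | p) = (det N₂ | p)`. -/
theorem stmt_13 (p n : ℕ) [Fact p.Prime] (hp2 : p ≠ 2)
    (M : Matrix (Fin n) (Fin n) ℤ) (hsymm : M.IsSymm)
    (T₁ T₂ : Matrix (Fin n) (Fin n) ℤ)
    (hT₁ : T₁.det = 1 ∨ T₁.det = -1) (hT₂ : T₂.det = 1 ∨ T₂.det = -1)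
    (r₁ r₂ : ℕ) (hr₁ : r₁ ≤ n) (hr₂ : r₂ ≤ n)
    (hN₁ : ¬ (p : ℤ) ∣ (upperLeft (T₁ * M * T₁ᵀ) r₁ hr₁).det)
    (hout₁ : ∀ i j : Fin n, (r₁ ≤ (i : ℕ) ∨ r₁ ≤ (j : ℕ)) → (p : ℤ) ∣ (T₁ * M * T₁ᵀ) i j)
    (hN₂ : ¬ (p : ℤ) ∣ (upperLeft (T₂ * M * T₂ᵀ) r₂ hr₂).det)
    (hout₂ : ∀ i j : Fin n, (r₂ ≤ (i : ℕ) ∨ r₂ ≤ (j : ℕ)) → (p : ℤ) ∣ (T₂ * M * T₂ᵀ) i j) :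
    r₁ = r₂ ∧
      legendreSym p (upperLeft (T₁ * M * T₁ᵀ) r₁ hr₁).det =
        legendreSym p (upperLeft (T₂ * M * T₂ᵀ) r₂ hr₂).det :=
  stmt_13_general p n M T₁ T₂ hT₁ hT₂ r₁ r₂ hr₁ hr₂ hN₁ hout₁ hN₂ hout₂
end
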